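/- arXiv:2410.21915 — 6 statements merged into one kernel-verified Lean document; each statement's English description precedes it below -/
import Mathlib

section
/- Under the standing setup, fix t ∈ ℕ and for n ∈ ℕ, g ∈ G set I_{t,n}(g) = {γ ∈ Γ_t : D_t + γ ⊆ D_n + g} and R_{t,n}(g) = (D_n + g) \ ⋃_{γ ∈ I_{t,n}(g)}(D_t + γ). Then #R_{t,n}(g)/#D_n → 0 and #I_{t,n}(g)/#D_n → 1/#D_t as n → ∞, and both convergences are uniform in g ∈ G. -/
/-!
The translates `γ + D_t`, `γ ∈ Γ_t`, tile `G` because `D_t` is a fundamental domain, so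
`#D_n = #R_{t,n}(g) + #I_{t,n}(g) · #D_t` and the second claim follows from the first.
A point `x ∈ R_{t,n}(g)` lies in a tile `γ + D_t` sticking out of `g + D_n`, at `γ + d'` say;
if `x = γ + d` then `x - g ∈ D_n \ (d - d' + D_n)`. Hence
`#R_{t,n}(g) ≤ ∑_{k ∈ D_t - D_t} #((k + D_n) ∆ D_n)`, a bound independent of `g` that is
`o(#D_n)` by the Følner property.
-/

namespace ToeplitzPaper

open Filter Topology Set

variable {G : Type*} [AddCommGroup G]

/-- The shift action of `G` on arrays `G → A`: `(shiftArr g x) h = x (h + g)`. -/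
def shiftArr {A : Type*} (g : G) (x : G → A) : G → A := fun h => x (h + g)

/-- The orbit of an array under the shift action. -/
def shiftOrbit {A : Type*} (x : G → A) : Set (G → A) := Set.range fun g : G => shiftArr g x

/-- The orbit closure of an array: the subshift generated by it
(`A` carries the discrete topology, `G → A` the product topology). -/
def orbitClosure {A : Type*} [TopologicalSpace A] (x : G → A) : Set (G → A) :=
  closure (shiftOrbit x)

/-- A subshift is minimal if every orbit is dense in it. -/
def IsMinimalSubshift {A : Type*} [TopologicalSpace A] (X : Set (G → A)) : Prop :=
  X.Nonempty ∧ ∀ y ∈ X, X ⊆ closure (shiftOrbit y)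

/-- `μ` is a shift-invariant probability measure giving full mass to `X`. -/
def InvariantProbOn {A : Type*} [MeasurableSpace A] (X : Set (G → A))
    (μ : MeasureTheory.Measure (G → A)) : Prop :=
  MeasureTheory.IsProbabilityMeasure μ ∧ μ X = 1 ∧
  ∀ g : G, MeasureTheory.Measure.map (shiftArr g) μ = μ

/-- A subshift is uniquely ergodic if it carries exactly one invariant probability measure. -/
def UniquelyErgodicSubshift {A : Type*} [MeasurableSpace A] (X : Set (G → A)) : Prop :=
  ∃! μ : MeasureTheory.Measure (G → A), InvariantProbOn X μ

/-- Strictly ergodic = minimal and uniquely ergodic. -/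
def StrictlyErgodicSubshift {A : Type*} [TopologicalSpace A] [MeasurableSpace A]
    (X : Set (G → A)) : Prop :=
  IsMinimalSubshift X ∧ UniquelyErgodicSubshift X

/-- A Toeplitz array: every position is periodic with respect to some
finite-index subgroup. -/
def IsToeplitz {A : Type*} (x : G → A) : Prop :=
  ∀ g : G, ∃ Γ : AddSubgroup G, Γ.FiniteIndex ∧ ∀ γ ∈ Γ, x (g + γ) = x g

/-- A Følner sequence of (nonempty finite) subsets of `G`. -/
def IsFolnerSeq (D : ℕ → Set G) : Prop :=
  (∀ n, (D n).Finite) ∧ (∀ n, (D n).Nonempty) ∧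
  ∀ g : G,
    Tendsto (fun n => ((symmDiff ((g + ·) '' D n) (D n)).ncard : ℝ) / ((D n).ncard : ℝ))
      atTop (𝓝 0)

/-- The number of `M`-blocks occurring in `X`. -/
noncomputable def blockCount {A : Type*} (X : Set (G → A)) (M : Set G) : ℕ :=
  Set.ncard {B : M → A | ∃ y ∈ X, ∀ m : M, y ↑m = B m}

/-- `X` has topological entropy `h`: along every Følner sequence the
exponential growth rate of the number of blocks converges to `h`. -/
def HasTopEntropy {A : Type*} (X : Set (G → A)) (h : ℝ) : Prop :=
  ∀ F : ℕ → Set G, IsFolnerSeq F →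
    Tendsto (fun n => Real.log (blockCount X (F n)) / ((F n).ncard : ℝ)) atTop (𝓝 h)

/-- `D` is a fundamental domain for `G/Γ`: every element of `G` has a unique
representative in `D` modulo `Γ`. -/
def IsFundDomain (Γ : AddSubgroup G) (D : Set G) : Prop :=
  ∀ g : G, ∃! d, d ∈ D ∧ g - d ∈ Γ

/-- The standing setup: a decreasing sequence of finite-index subgroups with
trivial intersection together with an adapted Følner sequence of fundamental
domains. -/
def StandingSetup (Γ : ℕ → AddSubgroup G) (D : ℕ → Set G) : Prop :=
  (∀ n, Γ (n + 1) ≤ Γ n) ∧ (∀ n, (Γ n).FiniteIndex) ∧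
  ((⋂ n, (Γ n : Set G)) = {0}) ∧
  (∀ n, (D n).Finite) ∧ ((⋃ n, D n) = Set.univ) ∧ (∀ n, (0 : G) ∈ D n) ∧
  (∀ n, D n ⊆ D (n + 1)) ∧ (∀ n, IsFundDomain (Γ n) (D n)) ∧
  (∀ m n, n < m → D m = ⋃ γ ∈ D m ∩ (Γ n : Set G), (γ + ·) '' D n) ∧
  IsFolnerSeq D

/-- The set `W_{D_t}(x)` of `D_t`-symbols of `x`. -/
def DSymbols {A : Type*} (x : G → A) (Γt : AddSubgroup G) (Dt : Set G) : Set (Dt → A) :=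
  {B | ∃ γ ∈ Γt, ∀ d : Dt, B d = x (↑d + γ)}

/-- The frequency `ap(B,C)` of the `D_t`-symbol `B` appearing in the
`D_s`-symbol `C` along points of `Γ_t`. -/
noncomputable def apFreq {A : Type*} (Γt : AddSubgroup G) (Dt Ds : Set G)
    (B : Dt → A) (C : Ds → A) : ℝ :=
  (({γ : G | γ ∈ Ds ∧ γ ∈ Γt ∧
      ∀ d : Dt, ∀ hm : (↑d + γ : G) ∈ Ds, C ⟨↑d + γ, hm⟩ = B d}).ncard : ℝ) /
    (({γ : G | γ ∈ Ds ∧ γ ∈ Γt}).ncard : ℝ)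

/-- For every `t` and every `D_t`-symbol `B` of `x`, the frequencies `ap(B,C)`
converge, uniformly in the `D_s`-symbol `C`, to some number `ν(B)` as `s → ∞`. -/
def ApUniformLimit {A : Type*} (x : G → A) (Γ : ℕ → AddSubgroup G) (D : ℕ → Set G) : Prop :=
  ∀ t : ℕ, ∀ B ∈ DSymbols x (Γ t) (D t), ∃ ν : ℝ,
    ∀ ε : ℝ, 0 < ε → ∃ s₀ : ℕ, ∀ s : ℕ, s₀ ≤ s → t ≤ s →
      ∀ C ∈ DSymbols x (Γ s) (D s), |apFreq (Γ t) (D t) (D s) B C - ν| < ε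

/-- `I_{t,n}(g) = {γ ∈ Γ_t : D_t + γ ⊆ D_n + g}`. -/
def Iset (Γt : AddSubgroup G) (Dt Dn : Set G) (g : G) : Set G :=
  {γ | γ ∈ Γt ∧ (γ + ·) '' Dt ⊆ (g + ·) '' Dn}

/-- `R_{t,n}(g) = (D_n + g) \ ⋃_{γ ∈ I_{t,n}(g)} (D_t + γ)`. -/
def Rset (Γt : AddSubgroup G) (Dt Dn : Set G) (g : G) : Set G :=
  ((g + ·) '' Dn) \ ⋃ γ ∈ Iset Γt Dt Dn g, (γ + ·) '' Dt

open scoped Pointwise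

theorem forall_exists_abs_lt_of_abs_le_of_tendsto_zero {α : Type*} {f : ℕ → α → ℝ} {S : ℕ → ℝ}
    (hS : Tendsto S atTop (𝓝 0)) (hf : ∀ n x, |f n x| ≤ S n) :
    ∀ ε : ℝ, 0 < ε → ∃ N : ℕ, ∀ n : ℕ, N ≤ n → ∀ x, |f n x| < ε := by
  intro ε hε
  obtain ⟨N, hN⟩ := eventually_atTop.mp (hS.eventually (gt_mem_nhds hε))
  exact ⟨N, fun n hn x => (hf n x).trans_lt (hN n hn)⟩

theorem IsFolnerSeq.tendsto_sum_ncard_symmDiff_div {D : ℕ → Set G} (hD : IsFolnerSeq D)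
    (K : Finset G) :
    Tendsto (fun n => ∑ k ∈ K, ((symmDiff ((k + ·) '' D n) (D n)).ncard : ℝ) / (D n).ncard)
      atTop (𝓝 0) := by
  simpa using tendsto_finsetSum K fun k _ => hD.2.2 k

section Tiling

variable {Γt : AddSubgroup G} {Dt Dn : Set G}

theorem IsFundDomain.existsUnique_mem_add_image (hfd : IsFundDomain Γt Dt) (x : G) :
    ∃! γ : G, γ ∈ Γt ∧ x ∈ (γ + ·) '' Dt := by
  obtain ⟨d, ⟨hd, hdΓ⟩, huniq⟩ := hfd x
  refine ⟨x - d, ⟨hdΓ, d, hd, sub_add_cancel x d⟩, ?_⟩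
  rintro γ ⟨hγ, d', hd', rfl⟩
  obtain rfl : d' = d := huniq d' ⟨hd', by simpa using hγ⟩
  simp

theorem IsFundDomain.injOn_add (hfd : IsFundDomain Γt Dt) :
    InjOn (fun p : G × G => p.1 + p.2) ((Γt : Set G) ×ˢ Dt) := by
  rintro ⟨γ, d⟩ ⟨hγ, hd⟩ ⟨γ', d'⟩ ⟨hγ', hd'⟩ (h : γ + d = γ' + d')
  obtain ⟨c, -, hc⟩ := hfd.existsUnique_mem_add_image (γ + d)
  obtain rfl : γ = γ' := (hc γ ⟨hγ, d, hd, rfl⟩).trans (hc γ' ⟨hγ', d', hd', h.symm⟩).symm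
  simp [add_left_cancel h]

theorem iUnion_Iset_eq_image_add (g : G) :
    ⋃ γ ∈ Iset Γt Dt Dn g, (γ + ·) '' Dt =
      (fun p : G × G => p.1 + p.2) '' (Iset Γt Dt Dn g ×ˢ Dt) := by
  ext x
  simp only [mem_iUnion, mem_image, mem_prod, Prod.exists, exists_prop, and_assoc]
  exact ⟨fun ⟨γ, hγ, d, hd, h⟩ => ⟨γ, d, hγ, hd, h⟩, fun ⟨γ, d, hγ, hd, h⟩ => ⟨γ, hγ, d, hd, h⟩⟩

theorem ncard_eq_ncard_Rset_add_ncard_Iset_mul (hfd : IsFundDomain Γt Dt)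
    (hDn : Dn.Finite) (g : G) :
    Dn.ncard = (Rset Γt Dt Dn g).ncard + (Iset Γt Dt Dn g).ncard * Dt.ncard := by
  have hcover : ⋃ γ ∈ Iset Γt Dt Dn g, (γ + ·) '' Dt ⊆ (g + ·) '' Dn :=
    iUnion₂_subset fun γ hγ => hγ.2
  have hinj : InjOn (fun p : G × G => p.1 + p.2) (Iset Γt Dt Dn g ×ˢ Dt) :=
    hfd.injOn_add.mono (prod_mono (fun γ hγ => hγ.1) subset_rfl)
  rw [← ncard_prod, ← hinj.ncard_image, ← iUnion_Iset_eq_image_add, Rset,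
    ncard_sdiff_add_ncard_of_subset hcover (hDn.image _),
    ncard_image_of_injective Dn (add_right_injective g)]

theorem exists_sub_mem_diff_of_mem_Rset (hfd : IsFundDomain Γt Dt) {g x : G}
    (hx : x ∈ Rset Γt Dt Dn g) : ∃ d ∈ Dt, ∃ d' ∈ Dt, x - g ∈ Dn \ ((d - d') + ·) '' Dn := by
  obtain ⟨⟨z, hz, rfl⟩, hxI⟩ := hx
  obtain ⟨γ, ⟨hγ, d, hd, hxd⟩, -⟩ := hfd.existsUnique_mem_add_image (g + z)
  have hγI : γ ∉ Iset Γt Dt Dn g := fun hγI => hxI (mem_biUnion hγI ⟨d, hd, hxd⟩)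
  obtain ⟨-, ⟨d', hd', rfl⟩, hout⟩ := not_subset.mp fun h => hγI ⟨hγ, h⟩
  refine ⟨d, hd, d', hd', by simpa using hz, ?_⟩
  rintro ⟨w, hw, hwz⟩
  refine hout ⟨w, hw, ?_⟩
  simp only at hwz hxd ⊢
  linear_combination (norm := abel) hwz - hxd

theorem ncard_Rset_le_sum [DecidableEq G] (hfd : IsFundDomain Γt Dt) (hDt : Dt.Finite)
    (hDn : Dn.Finite) (g : G) :
    (Rset Γt Dt Dn g).ncard ≤
      ∑ k ∈ hDt.toFinset - hDt.toFinset, (symmDiff ((k + ·) '' Dn) Dn).ncard := by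
  have hsub : (· - g) '' Rset Γt Dt Dn g ⊆
      ⋃ k ∈ hDt.toFinset - hDt.toFinset, symmDiff ((k + ·) '' Dn) Dn := by
    rintro _ ⟨x, hx, rfl⟩
    obtain ⟨d, hd, d', hd', hxg⟩ := exists_sub_mem_diff_of_mem_Rset hfd hx
    exact mem_biUnion (Finset.sub_mem_sub (by simpa using hd) (by simpa using hd'))
      (mem_symmDiff.mpr (Or.inr hxg))
  have hfin : (⋃ k ∈ hDt.toFinset - hDt.toFinset, symmDiff ((k + ·) '' Dn) Dn).Finite :=
    (Finset.finite_toSet _).biUnion fun _ _ => (hDn.image _).symmDiff hDn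
  calc (Rset Γt Dt Dn g).ncard = ((· - g) '' Rset Γt Dt Dn g).ncard :=
        (ncard_image_of_injective _ (sub_left_injective)).symm
    _ ≤ _ := ncard_le_ncard hsub hfin
    _ ≤ _ := Finset.set_ncard_biUnion_le _ _

theorem abs_ncard_Rset_div_le_sum [DecidableEq G] (hfd : IsFundDomain Γt Dt)
    (hDt : Dt.Finite) (hDn : Dn.Finite) (g : G) :
    |((Rset Γt Dt Dn g).ncard : ℝ) / Dn.ncard| ≤
      ∑ k ∈ hDt.toFinset - hDt.toFinset, ((symmDiff ((k + ·) '' Dn) Dn).ncard : ℝ) / Dn.ncard := by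
  rw [abs_of_nonneg (by positivity), ← Finset.sum_div]
  gcongr
  exact_mod_cast ncard_Rset_le_sum hfd hDt hDn g

theorem abs_ncard_Iset_div_sub_le (hfd : IsFundDomain Γt Dt) (hDt : Dt.Finite)
    (hDn : Dn.Finite) (hDn₀ : Dn.Nonempty) (g : G) :
    |((Iset Γt Dt Dn g).ncard : ℝ) / Dn.ncard - 1 / Dt.ncard| ≤
      ((Rset Γt Dt Dn g).ncard : ℝ) / Dn.ncard := by
  obtain ⟨d, ⟨hd, -⟩, -⟩ := hfd 0
  have hdt : (1 : ℝ) ≤ Dt.ncard := by exact_mod_cast (ncard_pos hDt).mpr ⟨d, hd⟩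
  have hdn : (0 : ℝ) < Dn.ncard := by exact_mod_cast (ncard_pos hDn).mpr hDn₀
  have hcard : (Dn.ncard : ℝ) =
      (Rset Γt Dt Dn g).ncard + (Iset Γt Dt Dn g).ncard * Dt.ncard := by
    exact_mod_cast ncard_eq_ncard_Rset_add_ncard_Iset_mul hfd hDn g
  have hdiff : ((Iset Γt Dt Dn g).ncard : ℝ) / Dn.ncard - 1 / Dt.ncard =
      -(((Rset Γt Dt Dn g).ncard : ℝ) / (Dn.ncard * Dt.ncard)) := by
    field_simp
    linarith
  rw [hdiff, abs_neg, abs_of_nonneg (by positivity)]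
  exact div_le_div_of_nonneg_left (by positivity) hdn (le_mul_of_one_le_right hdn.le hdt)

end Tiling

theorem statement8_general {G : Type*} [AddCommGroup G]
    (Γ : ℕ → AddSubgroup G) (D : ℕ → Set G) (hsetup : StandingSetup Γ D)
    (t : ℕ) :
    (∀ ε : ℝ, 0 < ε → ∃ N : ℕ, ∀ n : ℕ, N ≤ n → ∀ g : G,
      |((Rset (Γ t) (D t) (D n) g).ncard : ℝ) / ((D n).ncard : ℝ)| < ε) ∧
    (∀ ε : ℝ, 0 < ε → ∃ N : ℕ, ∀ n : ℕ, N ≤ n → ∀ g : G,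
      |((Iset (Γ t) (D t) (D n) g).ncard : ℝ) / ((D n).ncard : ℝ)
        - 1 / ((D t).ncard : ℝ)| < ε) := by
  classical
  obtain ⟨-, -, -, hDfin, -, -, -, hfd, -, hFolner⟩ := hsetup
  have hR n g := abs_ncard_Rset_div_le_sum (hfd t) (hDfin t) (hDfin n) g
  have hS := hFolner.tendsto_sum_ncard_symmDiff_div ((hDfin t).toFinset - (hDfin t).toFinset)
  refine ⟨forall_exists_abs_lt_of_abs_le_of_tendsto_zero hS hR,
    forall_exists_abs_lt_of_abs_le_of_tendsto_zero hS fun n g => ?_⟩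
  exact (abs_ncard_Iset_div_sub_le (hfd t) (hDfin t) (hDfin n) (hFolner.2.1 n) g).trans
    ((le_abs_self _).trans (hR n g))

/-- **Lemma.** Under the standing setup, `#R_{t,n}(g)/#D_n → 0` and
`#I_{t,n}(g)/#D_n → 1/#D_t` as `n → ∞`, uniformly in `g ∈ G`. -/
theorem statement8 {G : Type*} [AddCommGroup G] [Countable G]
    (Γ : ℕ → AddSubgroup G) (D : ℕ → Set G) (hsetup : StandingSetup Γ D)
    (t : ℕ) :
    (∀ ε : ℝ, 0 < ε → ∃ N : ℕ, ∀ n : ℕ, N ≤ n → ∀ g : G,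
      |((Rset (Γ t) (D t) (D n) g).ncard : ℝ) / ((D n).ncard : ℝ)| < ε) ∧
    (∀ ε : ℝ, 0 < ε → ∃ N : ℕ, ∀ n : ℕ, N ≤ n → ∀ g : G,
      |((Iset (Γ t) (D t) (D n) g).ncard : ℝ) / ((D n).ncard : ℝ)
        - 1 / ((D t).ncard : ℝ)| < ε) :=
  statement8_general Γ D hsetup t

end ToeplitzPaper
end

section
/- Let G = ℤ^d, let x ∈ Σ^G be a Toeplitz array with period structure (Γ_n)_{n∈ℕ}, Γ_n = P_n ℤ^d for a scale (P_n), and let (D_n) be fundamental domains as in the standing setup. Fix t ∈ ℕ. Then the map Φ_t: cl O_G(x) → (G/Γ_t) × cl O_G(x^{(t)}), y ↦ (π_t(y)+Γ_t, y^{(t)}), is a homeomorphism, and it is a topological conjugacy between the Toeplitz subshift (cl O_G(x), G) and the skew product system on (G/Γ_t) × cl O_G(x^{(t)}) with action (g, (h+Γ_t, y)) ↦ (g+h+Γ_t, δ_t(g, h+Γ_t, y)). -/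
/-!
The offset `π_t(y) ∈ D_t` is cut out by the closed condition
`Per(x,Γ_t,α) - π_t(y) ⊆ Per(y,Γ_t,α)` for all `α`, and essentiality of `Γ_t` makes the
solution unique modulo `Γ_t`, hence unique in `D_t`. Since `D_t` is finite, `π_t` is therefore
locally constant on the orbit closure, so `Φ_t = (π_t + Γ_t, (·)^{(t)})` is continuous. Knowing
`π_t(y)`, the array `y` is read off from `y^{(t)}`, so `Φ_t` is injective; its range is compact and
contains `{c} × O(x^{(t)})` for every coset `c`, so `Φ_t` is onto, hence a homeomorphism. The
conjugacy is the computation `π_t(g y) ≡ g + π_t(y) mod Γ_t`.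
-/

namespace ToeplitzPaper

open Filter Topology Set

variable {G : Type*} [AddCommGroup G]

/-- `Per(x,Γ,α)`: positions on which `x` is `Γ`-periodically equal to `α`. -/
def PerSet {A : Type*} (x : G → A) (Γ : AddSubgroup G) (α : A) : Set G :=
  {g | ∀ γ ∈ Γ, x (g + γ) = α}

/-- `Per(x,Γ)`: the `Γ`-periodic positions of `x`. -/
def PerAll {A : Type*} (x : G → A) (Γ : AddSubgroup G) : Set G :=
  {g | ∀ γ ∈ Γ, x (g + γ) = x g}

/-- `Γ` is an essential period of `x`. -/
def IsEssentialPeriod {A : Type*} (x : G → A) (Γ : AddSubgroup G) : Prop :=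
  (PerAll x Γ).Nonempty ∧
  ∀ h : G, (∀ α : A, ∀ g ∈ PerSet x Γ α, g + h ∈ PerSet x Γ α) → h ∈ Γ

/-- A period structure of `x`. -/
def IsPeriodStructure {A : Type*} (x : G → A) (Γ : ℕ → AddSubgroup G) : Prop :=
  (∀ n, Γ (n + 1) ≤ Γ n) ∧ (∀ n, (Γ n).FiniteIndex) ∧
  (⋃ n, PerAll x (Γ n)) = Set.univ ∧ ∀ n, IsEssentialPeriod x (Γ n)

/-- The subgroup `P·ℤ^d ≤ ℤ^d` associated to an integer matrix `P`. -/
def matSub {d : ℕ} (P : Matrix (Fin d) (Fin d) ℤ) : AddSubgroup (Fin d → ℤ) :=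
  P.mulVecLin.toAddMonoidHom.range

/-- A scale: a sequence of `d×d` integer matrices with nonzero determinant
such that each `P_{n+1}` is `P_n` times an integer matrix. -/
def IsScale {d : ℕ} (P : ℕ → Matrix (Fin d) (Fin d) ℤ) : Prop :=
  (∀ n, (P n).det ≠ 0) ∧ ∀ n, ∃ Q : Matrix (Fin d) (Fin d) ℤ, P (n + 1) = P n * Q

/-- The box `P([0,1)^d) ∩ ℤ^d = {g : 0 ≤ g_i < P_{i,i}}` of a diagonal
matrix `P`. -/
def boxSet {d : ℕ} (P : Matrix (Fin d) (Fin d) ℤ) : Set (Fin d → ℤ) :=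
  {g | ∀ i, 0 ≤ g i ∧ g i < P i i}

/-- The array `y^{(t)} ∈ (W_{D_t})^{ℤ^d}`: `y^{(t)}(g) = W_t(y, P_t g)`, where
`W_t(y,γ)(d) = y(d + γ − π_t(y))`. -/
def ytArr {d : ℕ} {A : Type*} (P : Matrix (Fin d) (Fin d) ℤ)
    (Dt : Set (Fin d → ℤ)) (πt : ((Fin d → ℤ) → A) → (Fin d → ℤ))
    (y : (Fin d → ℤ) → A) : (Fin d → ℤ) → (Dt → A) :=
  fun g dd => y (↑dd + P.mulVec g - πt y)

section Shift

variable {A : Type*}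

theorem shiftArr_shiftArr (g k : G) (y : G → A) :
    shiftArr g (shiftArr k y) = shiftArr (g + k) y :=
  funext fun h => by simp only [shiftArr, add_assoc]

theorem perSet_shiftArr (y : G → A) (Γ : AddSubgroup G) (α : A) (g : G) :
    PerSet (shiftArr g y) Γ α = (· - g) '' PerSet y Γ α := by
  ext k
  simp [PerSet, shiftArr, add_right_comm, sub_eq_iff_eq_add]

variable [TopologicalSpace A]

theorem continuous_shiftArr (g : G) : Continuous (shiftArr g : (G → A) → G → A) :=
  continuous_pi fun h => continuous_apply (h + g)

theorem self_mem_orbitClosure (x : G → A) : x ∈ orbitClosure x :=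
  subset_closure ⟨0, funext fun h => by simp [shiftArr]⟩

theorem shiftArr_mem_orbitClosure {x y : G → A} (hy : y ∈ orbitClosure x) (g : G) :
    shiftArr g y ∈ orbitClosure x := by
  refine map_mem_closure (continuous_shiftArr g) hy ?_
  rintro _ ⟨k, rfl⟩
  exact ⟨g + k, (shiftArr_shiftArr g k x).symm⟩

theorem dense_preimage_shiftOrbit (x : G → A) :
    Dense ((↑) ⁻¹' shiftOrbit x : Set (orbitClosure x)) := by
  rw [Subtype.dense_iff, Subtype.image_preimage_coe,
    (inter_eq_right (s := orbitClosure x)).2 subset_closure]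
  rfl

theorem mapsTo_orbitClosure {H B : Type*} [AddCommGroup H] [TopologicalSpace B]
    {x : G → A} {f : (G → A) → H → B} (hf : ContinuousOn f (orbitClosure x))
    (hshift : ∀ g, ∃ h, f (shiftArr g x) = shiftArr h (f x)) :
    MapsTo f (orbitClosure x) (orbitClosure (f x)) := by
  refine fun y hy => closure_mono ?_ (hf.image_closure ⟨y, hy, rfl⟩)
  rintro _ ⟨_, ⟨g, rfl⟩, rfl⟩
  obtain ⟨h, hh⟩ := hshift g
  exact ⟨h, hh.symm⟩

end Shift

theorem IsLocallyConstant.continuous_of_forall_continuous {X ι Y : Type*} [TopologicalSpace X]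
    [TopologicalSpace Y] {c : X → ι} (hc : IsLocallyConstant c) {F : ι → X → Y}
    (hF : ∀ i, Continuous (F i)) : Continuous fun z => F (c z) z :=
  continuous_iff_continuousAt.2 fun y => (hF (c y)).continuousAt.congr <| by
    filter_upwards [hc.eventually_eq y] with z hz
    rw [hz]

theorem IsFundDomain.eq_of_sub_mem {Γ : AddSubgroup G} {D : Set G} (hD : IsFundDomain Γ D)
    {a b : G} (ha : a ∈ D) (hb : b ∈ D) (hab : a - b ∈ Γ) : a = b :=
  (hD b).unique ⟨ha, by simpa using neg_mem hab⟩ ⟨hb, by simp⟩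

theorem IsEssentialPeriod.sub_mem_of_image_subset {A : Type*} {x : G → A} {Γ : AddSubgroup G}
    (hx : IsEssentialPeriod x Γ) {a b : G}
    (h : ∀ α, (· - b) '' PerSet x Γ α ⊆ (· - a) '' PerSet x Γ α) : a - b ∈ Γ := by
  refine hx.2 _ fun α k hk => ?_
  obtain ⟨k', hk', hkk'⟩ := h α ⟨k, hk, rfl⟩
  have : k + (a - b) = k' := by
    simp only at hkk'
    rw [← sub_add_cancel k' a, hkk']; abel
  rwa [this]

theorem isClosed_setOf_subset_perSet {A : Type*} [TopologicalSpace A] [T1Space A] (S : Set G)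
    (Γ : AddSubgroup G) (α : A) : IsClosed {y : G → A | S ⊆ PerSet y Γ α} := by
  have : {y : G → A | S ⊆ PerSet y Γ α} = ⋂ k ∈ S, ⋂ γ ∈ Γ, (fun y => y (k + γ)) ⁻¹' {α} := by
    ext y
    simp [subset_def, PerSet]
  rw [this]
  exact isClosed_biInter fun k _ => isClosed_biInter fun γ _ =>
    isClosed_singleton.preimage (continuous_apply _)

/-- The map `π_t` of the paper: `π y ∈ D` is the offset by which the periodic parts of `y`
are translated from those of `x`. -/
def IsPeriodOffset {A : Type*} [TopologicalSpace A] (x : G → A) (Γ : AddSubgroup G) (D : Set G)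
    (π : (G → A) → G) : Prop :=
  ∀ y ∈ orbitClosure x, π y ∈ D ∧ ∀ α : A, PerSet y Γ α = (· - π y) '' PerSet x Γ α

namespace IsPeriodOffset

variable {A : Type*} [TopologicalSpace A] {x y : G → A} {Γ : AddSubgroup G} {D : Set G}
  {π : (G → A) → G}

theorem sub_mem_of_image_subset (hπ : IsPeriodOffset x Γ D π) (hx : IsEssentialPeriod x Γ)
    (hy : y ∈ orbitClosure x) {c : G} (h : ∀ α, (· - c) '' PerSet x Γ α ⊆ PerSet y Γ α) :
    π y - c ∈ Γ :=
  hx.sub_mem_of_image_subset fun α => (hπ y hy).2 α ▸ h α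

theorem shiftArr_sub_mem (hπ : IsPeriodOffset x Γ D π) (hx : IsEssentialPeriod x Γ)
    (hy : y ∈ orbitClosure x) (g : G) : π (shiftArr g y) - (g + π y) ∈ Γ := by
  refine hπ.sub_mem_of_image_subset hx (shiftArr_mem_orbitClosure hy g) fun α => ?_
  rw [perSet_shiftArr, (hπ y hy).2 α, image_image]
  simp only [sub_sub, add_comm g, subset_rfl]

theorem mk_shiftArr (hπ : IsPeriodOffset x Γ D π) (hx : IsEssentialPeriod x Γ)
    (hy : y ∈ orbitClosure x) (g : G) :
    (QuotientAddGroup.mk (π (shiftArr g y)) : G ⧸ Γ) = QuotientAddGroup.mk (g + π y) :=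
  QuotientAddGroup.eq_iff_sub_mem.2 (hπ.shiftArr_sub_mem hx hy g)

theorem shiftArr_eq (hπ : IsPeriodOffset x Γ D π) (hx : IsEssentialPeriod x Γ)
    (hD : IsFundDomain Γ D) (hy : y ∈ orbitClosure x) {g c : G} (hc : c ∈ D)
    (hgc : c - (g + π y) ∈ Γ) : π (shiftArr g y) = c := by
  refine hD.eq_of_sub_mem (hπ _ (shiftArr_mem_orbitClosure hy g)).1 hc ?_
  rw [← sub_sub_sub_cancel_right _ _ (g + π y)]
  exact sub_mem (hπ.shiftArr_sub_mem hx hy g) hgc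

theorem isLocallyConstant [T1Space A] (hπ : IsPeriodOffset x Γ D π) (hx : IsEssentialPeriod x Γ)
    (hD : IsFundDomain Γ D) (hDfin : D.Finite) :
    IsLocallyConstant ((orbitClosure x).domRestrict π) := by
  let C : G → Set (G → A) := fun c => {y | ∀ α, (· - c) '' PerSet x Γ α ⊆ PerSet y Γ α}
  have hC : ∀ c, IsClosed (C c) := fun c => by
    simp only [C, ofPred_forall]
    exact isClosed_iInter fun α => isClosed_setOf_subset_perSet _ Γ α
  -- on the orbit closure, `C c` is the fibre of `π` over `c ∈ D`
  have hfiber : ∀ c, (orbitClosure x).domRestrict π ⁻¹' {c} = (↑) ⁻¹' (⋃ c' ∈ D \ {c}, C c')ᶜ := by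
    intro c
    ext ⟨y, hy⟩
    simp only [mem_preimage, domRestrict_apply, mem_singleton_iff, mem_compl_iff, mem_iUnion,
      Set.mem_sdiff, exists_prop, not_exists, not_and]
    constructor
    · rintro rfl c' ⟨hc', hne⟩ hyc'
      exact hne (hD.eq_of_sub_mem (hπ y hy).1 hc' (hπ.sub_mem_of_image_subset hx hy hyc')).symm
    · intro h
      by_contra hne
      exact h _ ⟨(hπ y hy).1, hne⟩ fun α => ((hπ y hy).2 α).ge
  exact IsLocallyConstant.iff_isOpen_fiber.2 fun c => hfiber c ▸
    ((hDfin.sdiff).isClosed_biUnion fun c' _ => hC c').isOpen_compl.preimage continuous_subtype_val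

end IsPeriodOffset

theorem mem_matSub {d : ℕ} {P : Matrix (Fin d) (Fin d) ℤ} {g : Fin d → ℤ} :
    g ∈ matSub P ↔ ∃ v, P.mulVec v = g := by
  simp [matSub]

section ytArr

variable {d : ℕ} {A : Type*} {P : Matrix (Fin d) (Fin d) ℤ} {Dt : Set (Fin d → ℤ)}
  {π : ((Fin d → ℤ) → A) → (Fin d → ℤ)}

theorem ytArr_shiftArr {y : (Fin d → ℤ) → A} {g h : Fin d → ℤ}
    (hh : P.mulVec h = g - π (shiftArr g y) + π y) :
    ytArr P Dt π (shiftArr g y) = shiftArr h (ytArr P Dt π y) := by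
  funext g' dd
  simp only [ytArr, shiftArr, Matrix.mulVec_add, hh]
  congr 1
  abel

theorem eq_of_ytArr_eq (hD : IsFundDomain (matSub P) Dt) {y z : (Fin d → ℤ) → A}
    (hπ : π y = π z) (h : ytArr P Dt π y = ytArr P Dt π z) : y = z := by
  funext k
  obtain ⟨c, ⟨hc, hkc⟩, -⟩ := hD (k + π y)
  obtain ⟨v, hv⟩ := mem_matSub.1 hkc
  have hk : c + P.mulVec v - π y = k := by rw [hv]; abel
  have := congrFun (congrFun h v) ⟨c, hc⟩
  simp only [ytArr, ← hπ, hk] at this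
  exact this

theorem continuous_domRestrict_ytArr [TopologicalSpace A] {X : Set ((Fin d → ℤ) → A)}
    (hπ : IsLocallyConstant (X.domRestrict π)) : Continuous (X.domRestrict (ytArr P Dt π)) :=
  IsLocallyConstant.continuous_of_forall_continuous hπ
    (F := fun c (y : X) g (dd : Dt) => (y : _ → A) (dd + P.mulVec g - c)) fun _ =>
      continuous_pi fun _ => continuous_pi fun _ => (continuous_apply _).comp continuous_subtype_val

namespace IsPeriodOffset

variable [TopologicalSpace A] {x : (Fin d → ℤ) → A}

theorem mapsTo_ytArr [T1Space A] (hπ : IsPeriodOffset x (matSub P) Dt π)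
    (hx : IsEssentialPeriod x (matSub P)) (hD : IsFundDomain (matSub P) Dt) (hDfin : Dt.Finite) :
    MapsTo (ytArr P Dt π) (orbitClosure x) (orbitClosure (ytArr P Dt π x)) := by
  refine mapsTo_orbitClosure (continuousOn_iff_continuous_domRestrict.2
    (continuous_domRestrict_ytArr (hπ.isLocallyConstant hx hD hDfin))) fun g => ?_
  obtain ⟨h, hh⟩ := mem_matSub.1 (neg_mem (hπ.shiftArr_sub_mem hx (self_mem_orbitClosure x) g))
  exact ⟨h, ytArr_shiftArr (by rw [hh]; abel)⟩

theorem exists_shiftArr_mk_eq_ytArr_eq (hπ : IsPeriodOffset x (matSub P) Dt π)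
    (hx : IsEssentialPeriod x (matSub P)) (hD : IsFundDomain (matSub P) Dt)
    (c : (Fin d → ℤ) ⧸ matSub P) (h : Fin d → ℤ) :
    ∃ g, (QuotientAddGroup.mk (π (shiftArr g x)) : _ ⧸ matSub P) = c ∧
      ytArr P Dt π (shiftArr g x) = shiftArr h (ytArr P Dt π x) := by
  obtain ⟨c₀, rfl⟩ := QuotientAddGroup.mk_surjective c
  obtain ⟨c₁, ⟨hc₁, hc₀c₁⟩, -⟩ := hD c₀
  have hπg : π (shiftArr (P.mulVec h + c₁ - π x) x) = c₁ :=
    hπ.shiftArr_eq hx hD (self_mem_orbitClosure x) hc₁ <|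
      mem_matSub.2 ⟨-h, by rw [Matrix.mulVec_neg]; abel⟩
  refine ⟨P.mulVec h + c₁ - π x, ?_, ytArr_shiftArr ?_⟩
  · rw [hπg, QuotientAddGroup.eq_iff_sub_mem, ← neg_sub]
    exact neg_mem hc₀c₁
  · rw [hπg]; abel

theorem exists_homeomorph [Finite A] [DiscreteTopology A]
    (hπ : IsPeriodOffset x (matSub P) Dt π) (hx : IsEssentialPeriod x (matSub P))
    (hD : IsFundDomain (matSub P) Dt) (hDfin : Dt.Finite) :
    ∃ e : orbitClosure x ≃ₜ
        ((Fin d → ℤ) ⧸ matSub P) × orbitClosure (ytArr P Dt π x),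
      ∀ y : orbitClosure x, (e y).1 = QuotientAddGroup.mk (π y) ∧
        ((e y).2 : (Fin d → ℤ) → Dt → A) = ytArr P Dt π y := by
  have : CompactSpace (orbitClosure x) := isCompact_iff_compactSpace.1 isClosed_closure.isCompact
  have hπloc := hπ.isLocallyConstant hx hD hDfin
  have hmaps := hπ.mapsTo_ytArr hx hD hDfin
  let F : orbitClosure x → ((Fin d → ℤ) ⧸ matSub P) × orbitClosure (ytArr P Dt π x) :=
    fun y => (QuotientAddGroup.mk (π y), ⟨ytArr P Dt π y, hmaps y.2⟩)
  have hFcont : Continuous F :=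
    (hπloc.comp QuotientAddGroup.mk).continuous.prodMk
      ((continuous_domRestrict_ytArr hπloc).subtype_mk _)
  have hFinj : F.Injective := by
    intro y z hyz
    have hπyz : π y = π z := hD.eq_of_sub_mem (hπ y y.2).1 (hπ z z.2).1
      (QuotientAddGroup.eq_iff_sub_mem.1 (congrArg Prod.fst hyz))
    exact Subtype.ext (eq_of_ytArr_eq hD hπyz (congrArg (Subtype.val ∘ Prod.snd) hyz))
  have hFsurj : F.Surjective := by
    rintro ⟨c, w⟩
    have hclosed : IsClosed {w' | (c, w') ∈ range F} :=
      (isCompact_range hFcont).isClosed.preimage (continuous_const.prodMk continuous_id)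
    have horbit : (↑) ⁻¹' shiftOrbit (ytArr P Dt π x) ⊆ {w' | (c, w') ∈ range F} := by
      rintro w' ⟨h, hh⟩
      obtain ⟨g, hgc, hgw⟩ := hπ.exists_shiftArr_mk_eq_ytArr_eq hx hD c h
      exact ⟨⟨_, shiftArr_mem_orbitClosure (self_mem_orbitClosure x) g⟩,
        Prod.ext hgc (Subtype.ext (hgw.trans hh))⟩
    exact closure_minimal horbit hclosed (dense_preimage_shiftOrbit _ w)
  exact ⟨Continuous.homeoOfEquivCompactToT2 (f := Equiv.ofBijective F ⟨hFinj, hFsurj⟩) hFcont,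
    fun y => ⟨rfl, rfl⟩⟩

theorem ytArr_shiftArr_eq (hπ : IsPeriodOffset x (matSub P) Dt π)
    (hx : IsEssentialPeriod x (matSub P)) (hD : IsFundDomain (matSub P) Dt)
    {ψ : (Fin d → ℤ) → (Fin d → ℤ)} (hψ : ∀ g, ψ g ∈ Dt ∧ g - ψ g ∈ matSub P)
    {eps : (Fin d → ℤ) → (Fin d → ℤ) → (Fin d → ℤ)}
    (heps : ∀ g h, P.mulVec (eps g h) = -ψ (g + h) + g + ψ h)
    {y : (Fin d → ℤ) → A} (hy : y ∈ orbitClosure x) (g : Fin d → ℤ) :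
    ytArr P Dt π (shiftArr g y) = shiftArr (eps g (π y)) (ytArr P Dt π y) := by
  have hψ_self : ψ (π y) = π y :=
    hD.eq_of_sub_mem (hψ _).1 (hπ y hy).1 (by simpa using neg_mem (hψ (π y)).2)
  have hπg : π (shiftArr g y) = ψ (g + π y) :=
    hπ.shiftArr_eq hx hD hy (hψ _).1 (by simpa using neg_mem (hψ (g + π y)).2)
  exact ytArr_shiftArr (by rw [heps, hψ_self, hπg]; abel)

end IsPeriodOffset

end ytArr

theorem statement9_general (d : ℕ) {A : Type*}
    [Fintype A] [TopologicalSpace A] [DiscreteTopology A]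
    (P : ℕ → Matrix (Fin d) (Fin d) ℤ)
    (D : ℕ → Set (Fin d → ℤ))
    (hsetup : StandingSetup (fun n => matSub (P n)) D)
    (x : (Fin d → ℤ) → A)
    (hps : IsPeriodStructure x (fun n => matSub (P n)))
    (t : ℕ)
    (πt : ((Fin d → ℤ) → A) → (Fin d → ℤ))
    (hπt : ∀ y ∈ orbitClosure x, πt y ∈ D t ∧
      ∀ α : A, PerSet y (matSub (P t)) α =
        (fun g => g - πt y) '' PerSet x (matSub (P t)) α)
    (ψ : (Fin d → ℤ) → (Fin d → ℤ))
    (hψ : ∀ g, ψ g ∈ D t ∧ g - ψ g ∈ matSub (P t))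
    (eps : (Fin d → ℤ) → (Fin d → ℤ) → (Fin d → ℤ))
    (heps : ∀ g h' : Fin d → ℤ, (P t).mulVec (eps g h') = -ψ (g + h') + g + ψ h') :
    -- `y ∈ cl O(x)` implies `y^{(t)} ∈ cl O(x^{(t)})`
    (∀ y ∈ orbitClosure x,
      ytArr (P t) (D t) πt y ∈ orbitClosure (ytArr (P t) (D t) πt x)) ∧
    -- `Φ_t` is a homeomorphism
    (∃ e : ↥(orbitClosure x) ≃ₜ
        (((Fin d → ℤ) ⧸ matSub (P t)) × ↥(orbitClosure (ytArr (P t) (D t) πt x))),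
      ∀ y : ↥(orbitClosure x),
        (e y).1 = QuotientAddGroup.mk (πt ↑y) ∧
        ((e y).2 : (Fin d → ℤ) → (↥(D t) → A)) =
          ytArr (P t) (D t) πt ↑y) ∧
    -- `Φ_t` conjugates the shift to the skew product action
    (∀ y ∈ orbitClosure x, ∀ g : Fin d → ℤ,
      (QuotientAddGroup.mk (πt (shiftArr g y)) : (Fin d → ℤ) ⧸ matSub (P t)) =
        QuotientAddGroup.mk (g + πt y) ∧
      ytArr (P t) (D t) πt (shiftArr g y) =
        fun g' => ytArr (P t) (D t) πt y (g' + eps g (πt y))) := by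
  obtain ⟨-, -, -, hDfin, -, -, -, hDfund, -, -⟩ := hsetup
  have hπ : IsPeriodOffset x (matSub (P t)) (D t) πt := hπt
  have hess := hps.2.2.2 t
  exact ⟨hπ.mapsTo_ytArr hess (hDfund t) (hDfin t), hπ.exists_homeomorph hess (hDfund t) (hDfin t),
    fun y hy g => ⟨hπ.mk_shiftArr hess hy g, hπ.ytArr_shiftArr_eq hess (hDfund t) hψ heps hy g⟩⟩

/-- **Lemma (i)-(iii).** Let `x` be a Toeplitz array over `ℤ^d` with period
structure `Γ_n = P_n ℤ^d` for a scale `(P_n)`, and `(D_n)` fundamental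
domains as in the standing setup. Then `Φ_t : y ↦ (π_t(y) + Γ_t, y^{(t)})` is
a homeomorphism from the Toeplitz subshift onto
`(ℤ^d/Γ_t) × cl O(x^{(t)})`, and it conjugates the shift to the skew product
action `(g, (h + Γ_t, z)) ↦ (g + h + Γ_t, δ_t(g, h + Γ_t, z))`, where
`δ_t(g, h + Γ_t, z)(g') = z(g' + ε_t(g,h))`. -/
theorem statement9 (d : ℕ) {A : Type*}
    [Fintype A] [TopologicalSpace A] [DiscreteTopology A]
    (P : ℕ → Matrix (Fin d) (Fin d) ℤ) (hP : IsScale P)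
    (D : ℕ → Set (Fin d → ℤ))
    (hsetup : StandingSetup (fun n => matSub (P n)) D)
    (x : (Fin d → ℤ) → A) (hx : IsToeplitz x)
    (hps : IsPeriodStructure x (fun n => matSub (P n)))
    (t : ℕ)
    (πt : ((Fin d → ℤ) → A) → (Fin d → ℤ))
    (hπt : ∀ y ∈ orbitClosure x, πt y ∈ D t ∧
      ∀ α : A, PerSet y (matSub (P t)) α =
        (fun g => g - πt y) '' PerSet x (matSub (P t)) α)
    (ψ : (Fin d → ℤ) → (Fin d → ℤ))
    (hψ : ∀ g, ψ g ∈ D t ∧ g - ψ g ∈ matSub (P t))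
    (eps : (Fin d → ℤ) → (Fin d → ℤ) → (Fin d → ℤ))
    (heps : ∀ g h' : Fin d → ℤ, (P t).mulVec (eps g h') = -ψ (g + h') + g + ψ h') :
    -- `y ∈ cl O(x)` implies `y^{(t)} ∈ cl O(x^{(t)})`
    (∀ y ∈ orbitClosure x,
      ytArr (P t) (D t) πt y ∈ orbitClosure (ytArr (P t) (D t) πt x)) ∧
    -- `Φ_t` is a homeomorphism
    (∃ e : ↥(orbitClosure x) ≃ₜ
        (((Fin d → ℤ) ⧸ matSub (P t)) × ↥(orbitClosure (ytArr (P t) (D t) πt x))),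
      ∀ y : ↥(orbitClosure x),
        (e y).1 = QuotientAddGroup.mk (πt ↑y) ∧
        ((e y).2 : (Fin d → ℤ) → (↥(D t) → A)) =
          ytArr (P t) (D t) πt ↑y) ∧
    -- `Φ_t` conjugates the shift to the skew product action
    (∀ y ∈ orbitClosure x, ∀ g : Fin d → ℤ,
      (QuotientAddGroup.mk (πt (shiftArr g y)) : (Fin d → ℤ) ⧸ matSub (P t)) =
        QuotientAddGroup.mk (g + πt y) ∧
      ytArr (P t) (D t) πt (shiftArr g y) =
        fun g' => ytArr (P t) (D t) πt y (g' + eps g (πt y))) :=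
  statement9_general d P D hsetup x hps t πt hπt ψ hψ eps heps

end ToeplitzPaper
end

section
/- Let (P_n)_{n∈ℕ} be a scale of diagonal matrices P_n ∈ ℤ^{d×d} with positive diagonal entries and increment (Q_n), Γ_n = P_n ℤ^d with ⋂_n Γ_n = {0}, and D′_n = P_n([0,1)^d) ∩ ℤ^d. Assume there is N ∈ ℕ such that (Q_n)_{i,i} ≥ 4 for all n ≥ N and all i ∈ {1,…,d}. Define r_n ∈ ℤ^d by (r_n)_i = ⌊(Q_n)_{i,i}/4⌋, and s_1 = 0, s_{n+1} = P_n r_n + s_n; set D_n = D′_n − s_n. Then: (i) ℤ^d = ⋃_n D_n; (ii) 0 ∈ D_n ⊆ D_{n+1}; (iii) D_n is a fundamental domain of ℤ^d/Γ_n; (iv) D_m = ⋃_{γ ∈ D_m ∩ Γ_n}(γ + D_n) for m > n; (v) (D_n)_{n∈ℕ} is a Følner sequence in ℤ^d. -/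
namespace ToeplitzPaper

open Filter Topology Set

variable {G : Type*} [AddCommGroup G]

/-! `D_n` is the box `∏ᵢ [-s_{n,i}, -s_{n,i} + p_{n,i})` with `p_{n,i} = (P_n)_{i,i}`, and
`Γ_n = ∏ᵢ p_{n,i} ℤ`, so everything can be checked one coordinate at a time. An interval of
length `p` is a fundamental domain of `pℤ`. Since `0 ≤ s_{n,i} < p_{n,i}` and `p_{n,i}` divides
both `p_{m,i}` and `s_{m,i} - s_{n,i}` for `n ≤ m`, the interval of step `m` is a union of whole
`p_{n,i}ℤ`-translates of the interval of step `n`; this gives the tiling (iv) and, with the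
translate by `0`, the nesting. Once `(Q_n)_{i,i} ≥ 4`, the choice `r_n = ⌊Q_n/4⌋` moves both
endpoints of every interval outwards by at least one at each step, so the boxes exhaust `ℤ^d` and
their side lengths tend to infinity, which makes them a Følner sequence. -/

theorem IsFundDomain.eq_biUnion_image_add {Γ : AddSubgroup G} {D E : Set G}
    (hD : IsFundDomain Γ D)
    (hE : ∀ γ ∈ Γ, ∀ y ∈ D, γ + y ∈ E ↔ γ ∈ E) :
    E = ⋃ γ ∈ E ∩ (Γ : Set G), (γ + ·) '' D := by
  ext x
  simp only [mem_iUnion, mem_inter_iff, SetLike.mem_coe, mem_image, exists_prop]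
  constructor
  · intro hx
    obtain ⟨y, ⟨hyD, hxy⟩, -⟩ := hD x
    refine ⟨x - y, ⟨(hE _ hxy y hyD).1 (by simpa using hx), hxy⟩, y, hyD, by abel⟩
  · rintro ⟨γ, ⟨hγE, hγ⟩, y, hyD, rfl⟩
    exact (hE γ hγ y hyD).2 hγE

theorem IsFundDomain.pi {ι : Type*} {G : ι → Type*} [∀ i, AddCommGroup (G i)]
    {Γ : ∀ i, AddSubgroup (G i)} {D : ∀ i, Set (G i)} (hD : ∀ i, IsFundDomain (Γ i) (D i)) :
    IsFundDomain (AddSubgroup.pi univ Γ) (univ.pi D) := by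
  intro g
  choose x hx hx_unique using fun i => hD i (g i)
  refine ⟨x, ⟨mem_univ_pi.2 fun i => (hx i).1,
    (AddSubgroup.mem_pi _).2 fun i _ => (hx i).2⟩, ?_⟩
  rintro y ⟨hyD, hgy⟩
  exact funext fun i =>
    hx_unique i (y i) ⟨hyD i (mem_univ i), (AddSubgroup.mem_pi _).1 hgy i (mem_univ i)⟩

theorem isFundDomain_zmultiples_Ico {p : ℤ} (hp : 0 < p) (a : ℤ) :
    IsFundDomain (AddSubgroup.zmultiples p) (Ico a (a + p)) := by
  intro g
  refine ⟨toIcoMod hp a g, ⟨toIcoMod_mem_Ico hp a g, ?_⟩, ?_⟩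
  · rw [self_sub_toIcoMod]
    exact zsmul_mem (AddSubgroup.mem_zmultiples p) _
  · rintro x ⟨hx, hgx⟩
    obtain ⟨z, hz⟩ := Int.mem_zmultiples_iff.1 hgx
    exact ((toIcoMod_eq_iff hp).2 ⟨hx, z, by rw [smul_eq_mul]; linarith⟩).symm

theorem _root_.Int.mul_le_mul_add_iff {p u k t : ℤ} (ht : t ∈ Ico 0 p) :
    p * u ≤ p * k + t ↔ u ≤ k := by
  obtain ⟨ht0, htp⟩ := ht
  constructor
  · intro h
    by_contra! hk
    nlinarith
  · intro h
    nlinarith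

theorem add_mem_Ico_iff_mem_Ico {p a a' L γ y : ℤ} (h0 : (0 : ℤ) ∈ Ico a (a + p))
    (hy : y ∈ Ico a (a + p)) (hγ : p ∣ γ) (ha : p ∣ a' - a) (hL : p ∣ L) :
    γ + y ∈ Ico a' (a' + L) ↔ γ ∈ Ico a' (a' + L) := by
  obtain ⟨k, rfl⟩ := hγ
  obtain ⟨u, hu⟩ := ha
  obtain ⟨v, rfl⟩ := hL
  have hy' : y - a ∈ Ico 0 p := ⟨by linarith [hy.1], by linarith [hy.2]⟩
  have h0' : -a ∈ Ico 0 p := ⟨by linarith [h0.1], by linarith [h0.2]⟩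
  have h1 := Int.mul_le_mul_add_iff (u := u) (k := k) hy'
  have h2 := Int.mul_le_mul_add_iff (u := u) (k := k) h0'
  have h3 := Int.mul_le_mul_add_iff (u := u + v) (k := k) hy'
  have h4 := Int.mul_le_mul_add_iff (u := u + v) (k := k) h0'
  simp only [mem_Ico, mul_add] at *
  omega

section Matrix

theorem _root_.Matrix.IsDiag.mul_apply_self {n α : Type*} [Fintype n] [DecidableEq n]
    [NonUnitalNonAssocSemiring α] {P : Matrix n n α} (hP : P.IsDiag) (Q : Matrix n n α) (i : n) :
    (P * Q) i i = P i i * Q i i := by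
  nth_rw 1 [← hP.diagonal_diag]
  rw [Matrix.diagonal_mul, Matrix.diag_apply]

theorem _root_.Matrix.IsDiag.mulVec_apply {n α : Type*} [Fintype n] [DecidableEq n]
    [NonUnitalNonAssocSemiring α] {P : Matrix n n α} (hP : P.IsDiag) (v : n → α) (i : n) :
    P.mulVec v i = P i i * v i := by
  nth_rw 1 [← hP.diagonal_diag]
  rw [Matrix.mulVec_diagonal, Matrix.diag_apply]

variable {d : ℕ} {P : Matrix (Fin d) (Fin d) ℤ}

theorem matSub_eq_pi_zmultiples (hP : P.IsDiag) :
    matSub P = AddSubgroup.pi univ fun i => AddSubgroup.zmultiples (P i i) := by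
  ext v
  simp only [AddSubgroup.mem_pi, mem_univ, true_implies, Int.mem_zmultiples_iff]
  constructor
  · rintro ⟨x, rfl⟩ i
    exact ⟨x i, hP.mulVec_apply x i⟩
  · intro hv
    exact ⟨fun i => v i / P i i,
      funext fun i => (hP.mulVec_apply _ i).trans (Int.mul_ediv_cancel' (hv i))⟩

theorem image_sub_boxSet (t : Fin d → ℤ) :
    (fun v => v - t) '' boxSet P = univ.pi fun i => Ico (-t i) (-t i + P i i) := by
  ext g
  simp only [mem_image, boxSet, mem_ofPred_eq, mem_univ_pi, mem_Ico]
  constructor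
  · rintro ⟨v, hv, rfl⟩ i
    have := hv i
    simp only [Pi.sub_apply]
    omega
  · intro hg
    refine ⟨g + t, fun i => ?_, add_sub_cancel_right g t⟩
    have := hg i
    simp only [Pi.add_apply]
    omega

end Matrix

theorem tendsto_atTop_of_add_one_le {f : ℕ → ℤ} (N : ℕ)
    (hf : ∀ n ≥ N, f n + 1 ≤ f (n + 1)) : Tendsto f atTop atTop := by
  have hlin : ∀ n ≥ N, f N + ((n : ℤ) - N) ≤ f n := by
    intro n hn
    induction n, hn using Nat.le_induction with
    | base => simp
    | succ n hNn ih => push_cast; linarith [hf n hNn]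
  refine tendsto_atTop_mono' _ (eventually_atTop.2 ⟨N, hlin⟩) ?_
  exact tendsto_atTop_add_const_left _ _
    (tendsto_atTop_add_const_right _ _ tendsto_natCast_atTop_atTop)

/-- One diagonal coordinate `p n = (P_n)_{i,i}`, `q n = (Q_n)_{i,i}`, `r n = (r_n)_i`,
`s n = (s_n)_i` of the data of the theorem. -/
structure IsOffsetSeq (p q r s : ℕ → ℤ) : Prop where
  scale_succ : ∀ n, p (n + 1) = p n * q n
  offset_succ : ∀ n, s (n + 1) = p n * r n + s n
  incr_mem : ∀ n, r n ∈ Ico 0 (q n)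
  offset_zero_mem : s 0 ∈ Ico 0 (p 0)

namespace IsOffsetSeq

variable {p q r s : ℕ → ℤ} (h : IsOffsetSeq p q r s)
include h

theorem scale_dvd_of_le {n m : ℕ} (hnm : n ≤ m) : p n ∣ p m := by
  induction m, hnm using Nat.le_induction with
  | base => exact dvd_rfl
  | succ m _ ih => rw [h.scale_succ m]; exact ih.mul_right _

theorem scale_dvd_offset_sub {n m : ℕ} (hnm : n ≤ m) : p n ∣ s m - s n := by
  induction m, hnm using Nat.le_induction with
  | base => simp
  | succ m hnm ih =>
    rw [h.offset_succ m, add_sub_assoc]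
    exact dvd_add ((h.scale_dvd_of_le hnm).mul_right _) ih

theorem offset_mem_Ico (n : ℕ) : s n ∈ Ico 0 (p n) := by
  induction n with
  | zero => exact h.offset_zero_mem
  | succ n ih =>
    obtain ⟨hs0, hsp⟩ := ih
    obtain ⟨hr0, hrq⟩ := h.incr_mem n
    rw [h.offset_succ n, h.scale_succ n]
    constructor <;> nlinarith

theorem zero_mem_Ico (n : ℕ) : (0 : ℤ) ∈ Ico (-s n) (-s n + p n) := by
  have := h.offset_mem_Ico n
  exact ⟨by linarith [this.1], by linarith [this.2]⟩

theorem add_mem_Ico_iff {n m : ℕ} (hnm : n ≤ m) {γ y : ℤ} (hγ : p n ∣ γ)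
    (hy : y ∈ Ico (-s n) (-s n + p n)) :
    γ + y ∈ Ico (-s m) (-s m + p m) ↔ γ ∈ Ico (-s m) (-s m + p m) := by
  refine add_mem_Ico_iff_mem_Ico (h.zero_mem_Ico n) hy hγ ?_ (h.scale_dvd_of_le hnm)
  rw [neg_sub_neg, dvd_sub_comm]
  exact h.scale_dvd_offset_sub hnm

variable {N : ℕ} (hN : ∀ n ≥ N, 1 ≤ r n ∧ r n + 2 ≤ q n)
include hN

theorem tendsto_offset : Tendsto s atTop atTop :=
  tendsto_atTop_of_add_one_le N fun n hn => by
    have := h.offset_mem_Ico n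
    rw [h.offset_succ n]
    nlinarith [this.1, this.2, hN n hn]

theorem tendsto_neg_offset_add_scale : Tendsto (fun n => -s n + p n) atTop atTop :=
  tendsto_atTop_of_add_one_le N fun n hn => by
    have := h.offset_mem_Ico n
    rw [h.offset_succ n, h.scale_succ n]
    nlinarith [this.1, this.2, hN n hn]

end IsOffsetSeq

theorem ncard_symmDiff_image_add {B : Set G} (hB : B.Finite) (g : G) :
    ((symmDiff ((g + ·) '' B) B).ncard : ℝ) = 2 * B.ncard - 2 * ((g + ·) '' B ∩ B).ncard := by
  set A := (g + ·) '' B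
  have hA : A.Finite := hB.image _
  have hAB : A.ncard = B.ncard := ncard_image_of_injective _ (add_right_injective g)
  have h1 := ncard_sdiff_add_ncard_of_subset
    (inter_subset_left.trans subset_union_left : A ∩ B ⊆ A ∪ B) (hA.union hB)
  have h2 := ncard_union_add_ncard_inter A B hA hB
  rw [symmDiff_eq_sup_sdiff_inf]
  change (((A ∪ B) \ (A ∩ B)).ncard : ℝ) = _
  have : ((A ∪ B) \ (A ∩ B)).ncard + 2 * (A ∩ B).ncard = 2 * B.ncard := by omega
  have := congrArg (Nat.cast : ℕ → ℝ) this
  push_cast at this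
  linarith

section Boxes

variable {ι : Type*}

theorem iUnion_pi_Ico_eq_univ [Finite ι] {a b : ℕ → ι → ℤ}
    (ha : ∀ i, Tendsto (a · i) atTop atBot) (hb : ∀ i, Tendsto (b · i) atTop atTop) :
    ⋃ n, univ.pi (fun i => Ico (a n i) (b n i)) = univ := by
  refine eq_univ_of_forall fun g => mem_iUnion.2 ?_
  have hev : ∀ᶠ n in atTop, ∀ i, a n i ≤ g i ∧ g i < b n i :=
    eventually_all.2 fun i =>
      ((ha i).eventually_le_atBot (g i)).and ((hb i).eventually_gt_atTop (g i))
  exact hev.exists.imp fun n hn => mem_univ_pi.2 hn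

theorem image_add_pi_Ico (g a b : ι → ℤ) :
    (g + ·) '' univ.pi (fun i => Ico (a i) (b i)) =
      univ.pi fun i => Ico (g i + a i) (g i + b i) := by
  ext x
  simp only [image_add_left, mem_preimage, mem_univ_pi, mem_Ico, Pi.add_apply, Pi.neg_apply]
  exact forall_congr' fun i => by omega

variable [Fintype ι]

theorem ncard_pi_Ico {a b : ι → ℤ} (hab : ∀ i, a i ≤ b i) :
    ((univ.pi fun i => Ico (a i) (b i)).ncard : ℝ) = ∏ i, ((b i - a i : ℤ) : ℝ) := by
  classical
  have hbox : (univ.pi fun i => Ico (a i) (b i)) =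
      ↑(Fintype.piFinset fun i => Finset.Ico (a i) (b i)) := by
    simp [Fintype.coe_piFinset]
  rw [hbox, ncard_coe_finset, Fintype.card_piFinset, Nat.cast_prod]
  refine Finset.prod_congr rfl fun i _ => ?_
  rw [Int.card_Ico, ← Int.cast_natCast, Int.toNat_of_nonneg (sub_nonneg.2 (hab i))]

theorem ncard_image_add_pi_Ico_inter {g a L : ι → ℤ} (hL : ∀ i, |g i| ≤ L i) :
    (((g + ·) '' univ.pi (fun i => Ico (a i) (a i + L i)) ∩
        univ.pi (fun i => Ico (a i) (a i + L i))).ncard : ℝ) =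
      ∏ i, ((L i : ℝ) - |(g i : ℝ)|) := by
  have hlen : ∀ i,
      min (g i + (a i + L i)) (a i + L i) - max (g i + a i) (a i) = L i - |g i| := by
    intro i
    rw [max_def, min_def]
    rcases abs_cases (g i) with ⟨habs, hg⟩ | ⟨habs, hg⟩ <;> split_ifs <;> omega
  rw [image_add_pi_Ico, ← pi_inter_distrib]
  simp only [Ico_inter_Ico]
  rw [ncard_pi_Ico fun i => by linarith [hlen i, hL i]]
  push_cast [hlen]
  rfl

theorem isFolnerSeq_pi_Ico {a L : ℕ → ι → ℤ} (hL : ∀ n i, 0 < L n i)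
    (hL_tendsto : ∀ i, Tendsto (L · i) atTop atTop) :
    IsFolnerSeq fun n => univ.pi fun i => Ico (a n i) (a n i + L n i) := by
  refine ⟨fun n => Finite.pi fun i => finite_Ico _ _,
    fun n => univ_pi_nonempty_iff.2 fun i => nonempty_Ico.2 (by linarith [hL n i]), fun g => ?_⟩
  have hratio : ∀ᶠ n in atTop, 2 * (1 - ∏ i, (1 - |(g i : ℝ)| / L n i)) =
      ((symmDiff ((g + ·) '' univ.pi fun i => Ico (a n i) (a n i + L n i))
        (univ.pi fun i => Ico (a n i) (a n i + L n i))).ncard : ℝ) /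
        ((univ.pi fun i => Ico (a n i) (a n i + L n i)).ncard : ℝ) := by
    filter_upwards [eventually_all.2 fun i => (hL_tendsto i).eventually_ge_atTop |g i|] with n hn
    have hLpos : ∀ i, (0 : ℝ) < L n i := fun i => by exact_mod_cast hL n i
    rw [ncard_symmDiff_image_add (Finite.pi fun i => finite_Ico _ _),
      ncard_image_add_pi_Ico_inter hn, ncard_pi_Ico fun i => by linarith [hL n i]]
    simp only [add_sub_cancel_left]
    have hprod : ∏ i, (1 - |(g i : ℝ)| / L n i) =
        (∏ i, ((L n i : ℝ) - |(g i : ℝ)|)) / ∏ i, (L n i : ℝ) := by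
      rw [← Finset.prod_div_distrib]
      exact Finset.prod_congr rfl fun i _ => by rw [sub_div, div_self (hLpos i).ne']
    rw [hprod]
    field_simp [(Finset.prod_pos fun i _ => hLpos i).ne']
  have hprod : Tendsto (fun n => ∏ i, (1 - |(g i : ℝ)| / L n i)) atTop (𝓝 1) := by
    have hfactor : ∀ i, Tendsto (fun n => 1 - |(g i : ℝ)| / L n i) atTop (𝓝 1) := fun i => by
      simpa using (tendsto_const_nhds.div_atTop
        (tendsto_intCast_atTop_atTop.comp (hL_tendsto i))).const_sub (1 : ℝ)
    simpa using tendsto_finsetProd Finset.univ fun i _ => hfactor i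
  simpa using ((hprod.const_sub 1).const_mul 2).congr' hratio

end Boxes

theorem isOffsetSeq_diag {d : ℕ} {P Q : ℕ → Matrix (Fin d) (Fin d) ℤ} {r s : ℕ → Fin d → ℤ}
    (hQ : ∀ n, P (n + 1) = P n * Q n) (hdiag : ∀ n, (P n).IsDiag) (hpos : ∀ n i, 0 < P n i i)
    (hr : ∀ n i, r n i = Q n i i / 4) (hs0 : s 0 = 0)
    (hsrec : ∀ n, s (n + 1) = (P n).mulVec (r n) + s n) (i : Fin d) :
    IsOffsetSeq (P · i i) (Q · i i) (r · i) (s · i) := by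
  have hPQ n : P (n + 1) i i = P n i i * Q n i i := by rw [hQ n, (hdiag n).mul_apply_self]
  refine ⟨hPQ, fun n => ?_, fun n => ?_, by simp [hs0, hpos]⟩
  · rw [hsrec n, Pi.add_apply, (hdiag n).mulVec_apply]
  · have := pos_of_mul_pos_right ((hPQ n).symm ▸ hpos (n + 1) i) (hpos n i).le
    rw [hr]; constructor <;> omega

theorem statement13_general (d : ℕ) (P Q : ℕ → Matrix (Fin d) (Fin d) ℤ)
    (hQ : ∀ n, P (n + 1) = P n * Q n)
    (hdiag : ∀ n, (P n).IsDiag) (hpos : ∀ n i, 0 < P n i i)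
    (N : ℕ) (hQ4 : ∀ n, N ≤ n → ∀ i, 4 ≤ Q n i i)
    (r : ℕ → Fin d → ℤ) (hr : ∀ n i, r n i = Q n i i / 4)
    (s : ℕ → Fin d → ℤ) (hs0 : s 0 = 0)
    (hsrec : ∀ n, s (n + 1) = (P n).mulVec (r n) + s n)
    (D : ℕ → Set (Fin d → ℤ)) (hD : ∀ n, D n = (fun v => v - s n) '' boxSet (P n)) :
    ((⋃ n, D n) = Set.univ) ∧
    (∀ n, (0 : Fin d → ℤ) ∈ D n ∧ D n ⊆ D (n + 1)) ∧
    (∀ n, IsFundDomain (matSub (P n)) (D n)) ∧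
    (∀ m n, n < m → D m =
      ⋃ γ ∈ D m ∩ (matSub (P n) : Set (Fin d → ℤ)), (γ + ·) '' D n) ∧
    IsFolnerSeq D := by
  have hcoord := isOffsetSeq_diag hQ hdiag hpos hr hs0 hsrec
  have hrN i : ∀ n ≥ N, 1 ≤ r n i ∧ r n i + 2 ≤ Q n i i := fun n hn => by
    have := hQ4 n hn i
    rw [hr]; constructor <;> omega
  have hD' : D = fun n => univ.pi fun i => Ico (-s n i) (-s n i + P n i i) :=
    funext fun n => (hD n).trans (image_sub_boxSet _)
  have hzero n : (0 : Fin d → ℤ) ∈ D n := hD' ▸ fun i _ => (hcoord i).zero_mem_Ico n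
  have htile m n (hnm : n ≤ m) :
      ∀ γ ∈ matSub (P n), ∀ y ∈ D n, γ + y ∈ D m ↔ γ ∈ D m := by
    intro γ hγ y hy
    rw [matSub_eq_pi_zmultiples (hdiag n), AddSubgroup.mem_pi] at hγ
    rw [hD'] at hy ⊢
    exact forall₂_congr fun i _ => (hcoord i).add_mem_Ico_iff hnm
      (Int.mem_zmultiples_iff.1 (hγ i trivial)) (hy i trivial)
  have hfund n : IsFundDomain (matSub (P n)) (D n) := by
    rw [matSub_eq_pi_zmultiples (hdiag n), hD']
    exact IsFundDomain.pi fun i => isFundDomain_zmultiples_Ico (hpos n i) _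
  refine ⟨?_, fun n => ⟨hzero n, fun y hy => ?_⟩, hfund,
    fun m n hnm => (hfund n).eq_biUnion_image_add (htile m n hnm.le), ?_⟩
  · rw [hD']
    exact iUnion_pi_Ico_eq_univ
      (fun i => tendsto_neg_atTop_atBot.comp ((hcoord i).tendsto_offset (hrN i)))
      (fun i => (hcoord i).tendsto_neg_offset_add_scale (hrN i))
  · simpa using (htile (n + 1) n n.le_succ 0 (zero_mem _) y hy).2 (hzero (n + 1))
  · rw [hD']
    refine isFolnerSeq_pi_Ico hpos fun i =>
      tendsto_atTop_mono (fun n => ?_) ((hcoord i).tendsto_neg_offset_add_scale (hrN i))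
    linarith [((hcoord i).offset_mem_Ico n).1]

/-- **Lemma.** Under the assumptions of the previous lemma, if moreover the
increment satisfies `(Q_n)_{i,i} ≥ 4` for all `n ≥ N`, then the shifted boxes
`D_n = D'_n − s_n` (with `(r_n)_i = ⌊(Q_n)_{i,i}/4⌋`, `s_0 = 0`,
`s_{n+1} = P_n r_n + s_n`) satisfy: (i) `ℤ^d = ⋃_n D_n`;
(ii) `0 ∈ D_n ⊆ D_{n+1}`; (iii) `D_n` is a fundamental domain of `ℤ^d/Γ_n`;
(iv) `D_m = ⋃_{γ ∈ D_m ∩ Γ_n}(γ + D_n)` for `m > n`;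
(v) `(D_n)` is a Følner sequence in `ℤ^d`. -/
theorem statement13 (d : ℕ) (P Q : ℕ → Matrix (Fin d) (Fin d) ℤ)
    (hdet : ∀ n, (P n).det ≠ 0) (hQ : ∀ n, P (n + 1) = P n * Q n)
    (hdiag : ∀ n, (P n).IsDiag) (hpos : ∀ n i, 0 < P n i i)
    (hint : (⋂ n, (matSub (P n) : Set (Fin d → ℤ))) = {0})
    (N : ℕ) (hQ4 : ∀ n, N ≤ n → ∀ i, 4 ≤ Q n i i)
    (r : ℕ → Fin d → ℤ) (hr : ∀ n i, r n i = Q n i i / 4)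
    (s : ℕ → Fin d → ℤ) (hs0 : s 0 = 0)
    (hsrec : ∀ n, s (n + 1) = (P n).mulVec (r n) + s n)
    (D : ℕ → Set (Fin d → ℤ)) (hD : ∀ n, D n = (fun v => v - s n) '' boxSet (P n)) :
    ((⋃ n, D n) = Set.univ) ∧
    (∀ n, (0 : Fin d → ℤ) ∈ D n ∧ D n ⊆ D (n + 1)) ∧
    (∀ n, IsFundDomain (matSub (P n)) (D n)) ∧
    (∀ m n, n < m → D m =
      ⋃ γ ∈ D m ∩ (matSub (P n) : Set (Fin d → ℤ)), (γ + ·) '' D n) ∧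
    IsFolnerSeq D :=
  statement13_general d P Q hQ hdiag hpos N hQ4 r hr s hs0 hsrec D hD

end ToeplitzPaper
end

section
/- For every integer k ≥ 5, the sequence (λ_n(k))_{n≥0} defined by λ_n(k) = (1/p′_n) log q′_n is monotonically decreasing; in particular the limit λ(k) = lim_n λ_n(k) = inf_n λ_n(k) exists. -/
namespace ToeplitzPaper

open Filter Topology


/-- The pair `(p'_n, q'_n)` of sequences: `p'_0 = 1`, `q'_0 = k`,
`p'_{n+1} = p'_n q'_n`, `q'_{n+1} = (q'_n − 1)!`. -/
def grill (k : ℕ) : ℕ → ℕ × ℕ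
  | 0 => (1, k)
  | n + 1 => ((grill k n).1 * (grill k n).2, Nat.factorial ((grill k n).2 - 1))

/-- The sequence `p'_n = p'_n(k)`. -/
def pSeq' (k n : ℕ) : ℕ := (grill k n).1

/-- The sequence `q'_n = q'_n(k)`. -/
def qSeq' (k n : ℕ) : ℕ := (grill k n).2

/-- `λ_n(k) = (1/p'_n) log q'_n` (natural logarithm). -/
noncomputable def lamSeq (k : ℕ) (n : ℕ) : ℝ := Real.log (qSeq' k n) / (pSeq' k n)

/-! With `p = p'_n` and `q = q'_n`, `λ_{n+1} = log (q - 1)! / (p q) ≤ q log q / (p q) = λ_n`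
because `(q - 1)! ≤ q ^ q` (at `q = 0` both ends are `0`, as `x / 0 = 0`). Since every `λ_n ≥ 0`,
the decreasing sequence converges to its infimum. -/

theorem log_factorial_pred_le (q : ℕ) : Real.log ((q - 1).factorial : ℕ) ≤ q * Real.log q := by
  have h : ((q - 1).factorial : ℝ) ≤ (q : ℝ) ^ q := by
    exact_mod_cast (Nat.factorial_le (Nat.sub_le q 1)).trans q.factorial_le_pow
  calc Real.log ((q - 1).factorial : ℕ) ≤ Real.log ((q : ℝ) ^ q) :=
        Real.log_le_log (by positivity) h
    _ = q * Real.log q := Real.log_pow q _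

theorem pSeq'_succ (k n : ℕ) : pSeq' k (n + 1) = pSeq' k n * qSeq' k n := rfl

theorem qSeq'_succ (k n : ℕ) : qSeq' k (n + 1) = (qSeq' k n - 1).factorial := rfl

theorem lamSeq_nonneg (k n : ℕ) : 0 ≤ lamSeq k n :=
  div_nonneg (Real.log_natCast_nonneg _) (Nat.cast_nonneg _)

theorem lamSeq_succ_le (k n : ℕ) : lamSeq k (n + 1) ≤ lamSeq k n := by
  set p : ℝ := (pSeq' k n : ℝ)
  set q : ℝ := (qSeq' k n : ℝ)
  calc lamSeq k (n + 1) = Real.log ((qSeq' k n - 1).factorial : ℕ) / (p * q) := by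
        rw [lamSeq, pSeq'_succ, qSeq'_succ, Nat.cast_mul]
    _ ≤ q * Real.log q / (p * q) := by
        gcongr
        exact log_factorial_pred_le _
    _ = lamSeq k n := by
        change q * Real.log q / (p * q) = Real.log q / p
        rw [mul_comm p]
        rcases eq_or_ne q 0 with hq | hq
        · simp [hq]
        · exact mul_div_mul_left _ _ hq

theorem lamSeq_antitone (k : ℕ) : Antitone (lamSeq k) :=
  antitone_nat_of_succ_le (lamSeq_succ_le k)

theorem statement14_general (k : ℕ) :
    (∀ n : ℕ, lamSeq k (n + 1) ≤ lamSeq k n) ∧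
    Tendsto (lamSeq k) atTop (𝓝 (⨅ n : ℕ, lamSeq k n)) :=
  ⟨lamSeq_succ_le k,
    tendsto_atTop_ciInf (lamSeq_antitone k) ⟨0, Set.forall_mem_range.mpr (lamSeq_nonneg k)⟩⟩

/-- **Lemma (i).** For `k ≥ 5` the sequence `(λ_n(k))_n` is monotonically
decreasing; in particular its limit exists and equals `inf_n λ_n(k)`. -/
theorem statement14 (k : ℕ) (hk : 5 ≤ k) :
    (∀ n : ℕ, lamSeq k (n + 1) ≤ lamSeq k n) ∧
    Tendsto (lamSeq k) atTop (𝓝 (⨅ n : ℕ, lamSeq k n)) :=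
  statement14_general k

end ToeplitzPaper
end

section
/- For every integer k ≥ 5 the identity λ(k) = (1/k) · λ((k−1)!) holds, and λ(k) > 0. -/
namespace ToeplitzPaper

open Filter Topology


/-!
Shifting the index by one turns the sequences for `k` into those for `(k - 1)!`, with every
`p'_n` multiplied by `k`; this gives the identity. For positivity, the bound
`log (q - 1)! ≥ q log q - q - log q` shows that `α p' + 3 ≤ log q'` propagates from one step to
the next for any `α ≥ 0`; the choice `α = (log (k - 1)! - 3) / k` starts it at `n = 1`, and
`α > 0` because `(k - 1)! ≥ 24 > e³`.
-/

open Real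
open scoped Nat

lemma grill_succ (k n : ℕ) :
    grill k (n + 1) = (k * (grill (k - 1)! n).1, (grill (k - 1)! n).2) := by
  induction n with
  | zero => simp [grill]
  | succ n ih =>
    change (_ * _, _) = _
    rw [ih]
    simp [grill, mul_assoc]

lemma lamSeq_succ (k n : ℕ) : lamSeq k (n + 1) = (1 / (k : ℝ)) * lamSeq (k - 1)! n := by
  simp only [lamSeq, qSeq', pSeq', grill_succ]
  push_cast
  ring

lemma pSeq'_pos {k : ℕ} (hk : 0 < k) (n : ℕ) : 0 < pSeq' k n := by
  induction n generalizing k with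
  | zero => simp [pSeq', grill]
  | succ n ih =>
    simp only [pSeq', grill_succ]
    exact Nat.mul_pos hk (ih (Nat.factorial_pos _))

lemma natCast_mul_log_sub_le_log_factorial (n : ℕ) : n * log n - n ≤ log n ! := by
  rcases eq_or_ne n 0 with rfl | hn
  · simp
  have h2π : 0 ≤ log (2 * π) := log_nonneg (by linarith [pi_gt_three])
  linarith [Stirling.le_log_factorial_stirling hn, log_natCast_nonneg n]

lemma add_three_le_log_factorial_pred {α : ℝ} (hα : 0 ≤ α) {p q : ℕ}
    (h : α * p + 3 ≤ log q) : α * ↑(p * q) + 3 ≤ log (q - 1)! := by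
  have hq : 1 < q := by
    have : 0 < log q := by linarith [mul_nonneg hα p.cast_nonneg]
    exact_mod_cast (log_pos_iff q.cast_nonneg).1 this
  have hq2 : (2 : ℝ) ≤ q := by exact_mod_cast hq
  have hlog_fact : log q ! = log q + log (q - 1)! := by
    rw [← Nat.mul_factorial_pred (by omega : q ≠ 0), Nat.cast_mul,
      log_mul (by positivity) (by exact_mod_cast (Nat.factorial_pos _).ne')]
  have hmul : (q : ℝ) * (α * p + 3) ≤ q * log q := mul_le_mul_of_nonneg_left h (by positivity)
  push_cast
  calc α * (p * q) + 3 ≤ q * log q - q - log q := by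
        linarith [log_le_sub_one_of_pos (by linarith : (0 : ℝ) < q)]
    _ ≤ log q ! - log q := by linarith [natCast_mul_log_sub_le_log_factorial q]
    _ = log (q - 1)! := by rw [hlog_fact]; ring

lemma add_three_le_log_qSeq' {k : ℕ} {α : ℝ} (hα : 0 ≤ α)
    (hk : α * k + 3 ≤ log (k - 1)!) (n : ℕ) :
    α * pSeq' k (n + 1) + 3 ≤ log (qSeq' k (n + 1)) := by
  induction n with
  | zero => simpa [pSeq', qSeq', grill] using hk
  | succ n ih => exact add_three_le_log_factorial_pred hα ih

lemma three_lt_log_factorial_pred {k : ℕ} (hk : 5 ≤ k) : 3 < log (k - 1)! := by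
  have h24 : (24 : ℝ) ≤ (k - 1)! := by
    exact_mod_cast (Nat.factorial_le (by omega : 4 ≤ k - 1)).trans' (by decide : 24 ≤ 4 !)
  rw [lt_log_iff_exp_lt (by linarith)]
  calc exp 3 = exp 1 ^ 3 := by rw [exp_one_pow]; norm_num
    _ < 2.7182818286 ^ 3 := by gcongr; exact exp_one_lt_d9
    _ < (k - 1)! := by linarith

/-- **Lemma (iii).** For `k ≥ 5` one has `λ(k) = (1/k)·λ((k−1)!)` and
`λ(k) > 0`. -/
theorem statement16 (k : ℕ) (hk : 5 ≤ k)
    (L L' : ℝ) (hL : Tendsto (lamSeq k) atTop (𝓝 L))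
    (hL' : Tendsto (lamSeq (Nat.factorial (k - 1))) atTop (𝓝 L')) :
    L = (1 / (k : ℝ)) * L' ∧ 0 < L := by
  have hk0 : (0 : ℝ) < k := by positivity
  refine ⟨?_, ?_⟩
  · refine tendsto_nhds_unique ((tendsto_add_atTop_iff_nat 1).2 hL) ?_
    simpa only [lamSeq_succ] using hL'.const_mul (1 / (k : ℝ))
  · set α := (log (k - 1)! - 3) / k
    have hα : 0 < α := div_pos (by linarith [three_lt_log_factorial_pred hk]) hk0
    have hstart : α * k + 3 ≤ log (k - 1)! := by simp only [α]; field_simp; linarith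
    have hbound : ∀ n, α ≤ lamSeq k (n + 1) := fun n ↦ by
      rw [lamSeq, le_div_iff₀ (by exact_mod_cast pSeq'_pos (by omega) _)]
      linarith [add_three_le_log_qSeq' hα.le hstart n]
    exact hα.trans_le (ge_of_tendsto ((tendsto_add_atTop_iff_nat 1).2 hL) (.of_forall hbound))

end ToeplitzPaper
end

section
/- Let (P_n)_{n∈ℕ} be a scale of diagonal d×d integer matrices such that for every M ∈ ℕ and every i ∈ {1,…,d} there exists n ∈ ℕ with M dividing (P_n)_{i,i}. Let Γ_n = P_n ℤ^d and let G⃖ = lim← (ℤ^d/Γ_n) be the corresponding ℤ^d-odometer. Then G⃖ is the universal ℤ^d-odometer, i.e., every ℤ^d-odometer is a factor of (G⃖, ℤ^d). -/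
/-! Every finite-index subgroup `H ≤ ℤ^d` contains `[ℤ^d : H] • ℤ^d`, so the divisibility
hypothesis puts some `Γ_n = P_n ℤ^d` inside each `Γ'_k`. Choosing such a level `m k` for every
`k` and reducing the `m k`-th coordinate modulo `Γ'_k` gives a continuous equivariant map between
the inverse limits. Its image is compact, hence closed, and contains the constant sequences,
which are dense in the target odometer; so it is onto. -/

namespace ToeplitzPaper

open Filter Topology Set

variable {G : Type*} [AddCommGroup G]

variable [TopologicalSpace G]

/-- The ambient space `Π n, G/Γ_n` in which the `G`-odometer lives
(each quotient carries the quotient topology, the product the product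
topology). -/
abbrev OdoPi (Γ : ℕ → AddSubgroup G) : Type _ := ∀ n : ℕ, G ⧸ Γ n

/-- The action of `G` on `Π n, G/Γ_n` by coordinatewise addition of cosets. -/
def odoShift (Γ : ℕ → AddSubgroup G) (g : G) (f : OdoPi Γ) : OdoPi Γ :=
  fun n => QuotientAddGroup.mk g + f n

/-- The odometer: the inverse limit of the quotients `G/Γ_n`, realised as the
set of compatible sequences inside `Π n, G/Γ_n`. -/
def OdoSet (Γ : ℕ → AddSubgroup G) : Set (OdoPi Γ) :=
  {f | ∀ (n : ℕ) (g : G),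
    f (n + 1) = QuotientAddGroup.mk g → f n = QuotientAddGroup.mk g}

/-- The odometer of `Γ'` is a factor of the odometer of `Γ`: there is a
continuous surjective equivariant map between them. -/
def OdoFactor (Γ Γ' : ℕ → AddSubgroup G) : Prop :=
  ∃ r : OdoPi Γ → OdoPi Γ', ContinuousOn r (OdoSet Γ) ∧
    r '' OdoSet Γ = OdoSet Γ' ∧
    ∀ f ∈ OdoSet Γ, ∀ g : G, r (odoShift Γ g f) = odoShift Γ' g (r f)

/-- `Γ` defines the universal `G`-odometer: it is a `G`-odometer having every
`G`-odometer as a factor. -/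
def IsUniversalOdo (Γ : ℕ → AddSubgroup G) : Prop :=
  (∀ n, Γ (n + 1) ≤ Γ n) ∧ (∀ n, (Γ n).FiniteIndex) ∧
  ∀ Γ' : ℕ → AddSubgroup G, (∀ n, Γ' (n + 1) ≤ Γ' n) →
    (∀ n, (Γ' n).FiniteIndex) → OdoFactor Γ Γ'

section Odometer

variable {H : Type*} [AddCommGroup H] {Γ Γ' : ℕ → AddSubgroup H}

theorem eq_mk_of_mem_odoSet_of_le {f : OdoPi Γ} (hf : f ∈ OdoSet Γ) {a b : ℕ} (hab : a ≤ b)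
    {x : H} (hx : f b = QuotientAddGroup.mk x) : f a = QuotientAddGroup.mk x := by
  induction b, hab using Nat.le_induction with
  | base => exact hx
  | succ b _ ih => exact ih (hf b x hx)

theorem exists_mk_eq_of_mem_odoSet {f : OdoPi Γ} (hf : f ∈ OdoSet Γ) (a b : ℕ) :
    ∃ x : H, f a = QuotientAddGroup.mk x ∧ f b = QuotientAddGroup.mk x := by
  obtain ⟨x, hx⟩ := QuotientAddGroup.mk_surjective (f (max a b))
  exact ⟨x, eq_mk_of_mem_odoSet_of_le hf (le_max_left a b) hx.symm,
    eq_mk_of_mem_odoSet_of_le hf (le_max_right a b) hx.symm⟩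

theorem mem_odoSet_of_exists_mk_eq (hΓ : ∀ n, Γ (n + 1) ≤ Γ n) {f : OdoPi Γ}
    (h : ∀ n, ∃ x : H, f n = QuotientAddGroup.mk x ∧ f (n + 1) = QuotientAddGroup.mk x) :
    f ∈ OdoSet Γ := by
  intro n g hg
  obtain ⟨x, hn, hn1⟩ := h n
  rw [hn1, QuotientAddGroup.eq] at hg
  rw [hn, QuotientAddGroup.eq]
  exact hΓ n hg

theorem const_mem_odoSet (hΓ : ∀ n, Γ (n + 1) ≤ Γ n) (x : H) :
    (fun n => (x : H ⧸ Γ n)) ∈ OdoSet Γ :=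
  mem_odoSet_of_exists_mk_eq hΓ fun _ => ⟨x, rfl, rfl⟩

def odoMap (m : ℕ → ℕ) (hm : ∀ k, Γ (m k) ≤ Γ' k) (f : OdoPi Γ) : OdoPi Γ' :=
  fun k => QuotientAddGroup.map (Γ (m k)) (Γ' k) (AddMonoidHom.id H) (fun _ hx => hm k hx)
    (f (m k))

variable {m : ℕ → ℕ} {hm : ∀ k, Γ (m k) ≤ Γ' k}

theorem odoMap_apply_of_eq_mk {f : OdoPi Γ} {k : ℕ} {x : H} (hx : f (m k) = x) :
    odoMap m hm f k = x := by
  rw [odoMap, hx]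
  rfl

theorem odoMap_const (x : H) :
    odoMap m hm (fun n => (x : H ⧸ Γ n)) = fun k => (x : H ⧸ Γ' k) :=
  funext fun _ => odoMap_apply_of_eq_mk rfl

theorem odoMap_odoShift (g : H) (f : OdoPi Γ) :
    odoMap m hm (odoShift Γ g f) = odoShift Γ' g (odoMap m hm f) :=
  funext fun k => by
    simp only [odoMap, odoShift, map_add]
    rfl

theorem mapsTo_odoMap (hΓ' : ∀ n, Γ' (n + 1) ≤ Γ' n) :
    MapsTo (odoMap m hm) (OdoSet Γ) (OdoSet Γ') := fun f hf =>
  mem_odoSet_of_exists_mk_eq hΓ' fun k => by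
    obtain ⟨x, hk, hk1⟩ := exists_mk_eq_of_mem_odoSet hf (m k) (m (k + 1))
    exact ⟨x, odoMap_apply_of_eq_mk hk, odoMap_apply_of_eq_mk hk1⟩

variable [TopologicalSpace H] [DiscreteTopology H]

instance (N : AddSubgroup H) : DiscreteTopology (H ⧸ N) :=
  QuotientAddGroup.discreteTopology (isOpen_discrete _)

theorem isClosed_odoSet (Γ : ℕ → AddSubgroup H) : IsClosed (OdoSet Γ) := by
  simp only [OdoSet, ofPred_forall]
  refine isClosed_iInter fun n => isClosed_iInter fun g => ?_
  show IsClosed ((fun f : OdoPi Γ => (f (n + 1), f n)) ⁻¹'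
    {p | p.1 = (g : H ⧸ Γ (n + 1)) → p.2 = (g : H ⧸ Γ n)})
  exact (isClosed_discrete _).preimage (by fun_prop)

theorem continuous_odoMap : Continuous (odoMap m hm) :=
  continuous_pi fun k => continuous_of_discreteTopology.comp (continuous_apply (m k))

theorem image_odoMap_odoSet (hΓ : ∀ n, Γ (n + 1) ≤ Γ n)
    (hfin : ∀ n, (Γ n).FiniteIndex) (hΓ' : ∀ n, Γ' (n + 1) ≤ Γ' n) :
    odoMap m hm '' OdoSet Γ = OdoSet Γ' := by
  refine (mapsTo_odoMap hΓ').image_subset.antisymm fun f' hf' => ?_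
  -- `OdoPi Γ` is compact since every `H ⧸ Γ n` is finite by `hfin`
  have hclosed : IsClosed (odoMap m hm '' OdoSet Γ) :=
    ((isClosed_odoSet Γ).isCompact.image continuous_odoMap).isClosed
  choose x hx using fun n => QuotientAddGroup.mk_surjective (f' n)
  -- `f'` is the limit of the constant sequences `x n`, which are images of constant sequences
  refine hclosed.mem_of_tendsto (f := fun n k => (x n : H ⧸ Γ' k)) (b := atTop) ?_
    (Eventually.of_forall fun n => ⟨_, const_mem_odoSet hΓ (x n), odoMap_const (x n)⟩)
  refine tendsto_pi_nhds.2 fun k => tendsto_const_nhds.congr' ?_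
  filter_upwards [eventually_ge_atTop k] with n hn
  exact eq_mk_of_mem_odoSet_of_le hf' hn (hx n).symm

theorem odoFactor_of_forall_exists_le (hΓ : ∀ n, Γ (n + 1) ≤ Γ n)
    (hfin : ∀ n, (Γ n).FiniteIndex) (hΓ' : ∀ n, Γ' (n + 1) ≤ Γ' n)
    (h : ∀ k, ∃ n, Γ n ≤ Γ' k) : OdoFactor Γ Γ' := by
  choose m hm using h
  exact ⟨odoMap m hm, continuous_odoMap.continuousOn, image_odoMap_odoSet hΓ hfin hΓ',
    fun f _ g => odoMap_odoShift g f⟩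

end Odometer

section Scale

variable {d : ℕ}

theorem mem_of_forall_index_dvd {ι : Type*} (K : AddSubgroup (ι → ℤ)) {g : ι → ℤ}
    (hg : ∀ i, (K.index : ℤ) ∣ g i) : g ∈ K := by
  choose v hv using hg
  have hgv : g = K.index • v := funext fun i => by simp [hv i]
  exact hgv ▸ K.nsmul_index_mem v

theorem mem_matSub_iff_of_isDiag {P : Matrix (Fin d) (Fin d) ℤ} (hP : P.IsDiag)
    {g : Fin d → ℤ} : g ∈ matSub P ↔ ∀ i, P i i ∣ g i := by
  obtain ⟨D, rfl⟩ : ∃ D, P = Matrix.diagonal D := ⟨_, hP.diagonal_diag.symm⟩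
  simp only [matSub, AddMonoidHom.mem_range, LinearMap.toAddMonoidHom_coe,
    Matrix.mulVecLin_apply, funext_iff, Matrix.mulVec_diagonal, Matrix.diagonal_apply_eq]
  exact ⟨fun ⟨v, hv⟩ i => ⟨v i, (hv i).symm⟩,
    fun h => ⟨fun i => (h i).choose, fun i => (h i).choose_spec.symm⟩⟩

theorem finiteIndex_matSub_of_isDiag {P : Matrix (Fin d) (Fin d) ℤ} (hP : P.IsDiag)
    (hdet : P.det ≠ 0) : (matSub P).FiniteIndex := by
  have hne : ∀ i, P i i ≠ 0 := by
    rw [← hP.diagonal_diag, Matrix.det_diagonal, Finset.prod_ne_zero_iff] at hdet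
    exact fun i => hdet i (Finset.mem_univ i)
  have : ∀ i, NeZero (P i i).natAbs := fun i => ⟨Int.natAbs_ne_zero.2 (hne i)⟩
  let ψ : (Fin d → ℤ) →+ ∀ i, ZMod (P i i).natAbs :=
    AddMonoidHom.pi fun i => (Int.castAddHom _).comp (Pi.evalAddMonoidHom _ i)
  have hker : matSub P = ψ.ker := by
    ext g
    simp [ψ, mem_matSub_iff_of_isDiag hP, funext_iff, AddMonoidHom.pi_apply,
      ZMod.intCast_zmod_eq_zero_iff_dvd]
  rw [hker]
  exact AddSubgroup.finiteIndex_ker ψ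

theorem matSub_mul_le (P Q : Matrix (Fin d) (Fin d) ℤ) : matSub (P * Q) ≤ matSub P := by
  intro g hg
  obtain ⟨v, rfl⟩ := AddMonoidHom.mem_range.1 hg
  exact AddMonoidHom.mem_range.2 ⟨Q.mulVec v, by simp [Matrix.mulVec_mulVec]⟩

variable {P : ℕ → Matrix (Fin d) (Fin d) ℤ}

theorem IsScale.matSub_succ_le (hscale : IsScale P) (n : ℕ) :
    matSub (P (n + 1)) ≤ matSub (P n) := by
  obtain ⟨Q, hQ⟩ := hscale.2 n
  exact hQ ▸ matSub_mul_le (P n) Q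

theorem IsScale.diag_dvd_of_le (hscale : IsScale P) (hdiag : ∀ n, (P n).IsDiag) {a b : ℕ}
    (hab : a ≤ b) (i : Fin d) : P a i i ∣ P b i i := by
  induction b, hab using Nat.le_induction with
  | base => exact dvd_rfl
  | succ n _ ih =>
    obtain ⟨Q, hQ⟩ := hscale.2 n
    rw [hQ, ← (hdiag n).diagonal_diag, Matrix.diagonal_mul]
    exact ih.mul_right _

theorem IsScale.exists_matSub_le (hscale : IsScale P) (hdiag : ∀ n, (P n).IsDiag)
    (hdvd : ∀ M : ℕ, 0 < M → ∀ i : Fin d, ∃ n, (M : ℤ) ∣ P n i i)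
    (K : AddSubgroup (Fin d → ℤ)) (hK : K.index ≠ 0) : ∃ n, matSub (P n) ≤ K := by
  choose n hn using hdvd K.index (Nat.pos_of_ne_zero hK)
  refine ⟨Finset.univ.sup n, fun g hg => mem_of_forall_index_dvd K fun i => ?_⟩
  exact (hn i).trans <| (hscale.diag_dvd_of_le hdiag (Finset.le_sup (Finset.mem_univ i)) i).trans
    ((mem_matSub_iff_of_isDiag (hdiag _)).1 hg i)

end Scale

/-- **Corollary.** Let `(P_n)` be a scale of diagonal matrices such that for
every `M ≥ 1` and every `i` some `(P_n)_{i,i}` is divisible by `M`. Then the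
odometer associated to `Γ_n = P_n ℤ^d` is the universal `ℤ^d`-odometer: every
`ℤ^d`-odometer is a factor of it. -/
theorem statement19 (d : ℕ) (P : ℕ → Matrix (Fin d) (Fin d) ℤ)
    (hscale : IsScale P) (hdiag : ∀ n, (P n).IsDiag)
    (hdvd : ∀ M : ℕ, 0 < M → ∀ i : Fin d, ∃ n, (M : ℤ) ∣ P n i i) :
    ∀ Γ' : ℕ → AddSubgroup (Fin d → ℤ), (∀ n, Γ' (n + 1) ≤ Γ' n) →
      (∀ n, (Γ' n).FiniteIndex) →
      OdoFactor (fun n => matSub (P n)) Γ' := by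
  intro Γ' hΓ' hfin
  exact odoFactor_of_forall_exists_le (fun n => hscale.matSub_succ_le n)
    (fun n => finiteIndex_matSub_of_isDiag (hdiag n) (hscale.1 n)) hΓ'
    fun k => hscale.exists_matSub_le hdiag hdvd (Γ' k) (hfin k).index_ne_zero

end ToeplitzPaper
end
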